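/- For any constant ν > 0 there is a constant c(ν) > 0 such that for all sufficiently large n, every deterministic ν-reliable spanner H of the unweighted path metric on [n] (with any finite stretch, i.e., only required to keep all surviving points connected) has total edge weight at least c(ν)·n², i.e., lightness Ω(n). -/

import Mathlib

/-!
Attacking all endpoints of the edges that cross the gap between `t - 1` and `t` separates
`{i < t}` from `{i ≥ t}`, so one of the two sides lies in `B⁺`; hence at least
`min(t, n - t) / (1 + ν)` edges cross that gap. An edge `ij` crosses exactly `|i - j|` gaps, so
summing over the gaps gives the total weight, while `∑ₜ min(t, n - t)` is of order `n²`.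
-/

open scoped Classical

/-- The graph `H` with the vertices of `B` (and their edges) deleted. -/
def deleteVerts {V : Type*} (H : SimpleGraph V) (B : Finset V) : SimpleGraph V where
  Adj a b := H.Adj a b ∧ a ∉ B ∧ b ∉ B
  symm := ⟨fun a b h => ⟨h.1.symm, h.2.2, h.2.1⟩⟩
  loopless := ⟨fun a h => H.loopless.irrefl a h.1⟩

/-- Total weight of a graph on `[n]` whose edge `{i,j}` has weight `|i − j|`. -/
noncomputable def pathGraphWeight (n : ℕ) (H : SimpleGraph (Fin n)) : ℝ :=
  (∑ p : Fin n × Fin n,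
    if H.Adj p.1 p.2 then |((p.1 : ℕ) : ℝ) - ((p.2 : ℕ) : ℝ)| else 0) / 2

open Finset

def IsReliableConnSpanner {n : ℕ} (ν : ℝ) (H : SimpleGraph (Fin n)) : Prop :=
  ∀ B : Finset (Fin n), ∃ Bp : Finset (Fin n), B ⊆ Bp ∧
    ((Bp.card : ℝ) ≤ (1 + ν) * (B.card : ℝ)) ∧
    ∀ u, u ∉ Bp → ∀ v, v ∉ Bp → (deleteVerts H B).Reachable u v

noncomputable def crossingPairs {n : ℕ} (H : SimpleGraph (Fin n)) (t : ℕ) :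
    Finset (Fin n × Fin n) :=
  {p | H.Adj p.1 p.2 ∧ t ∈ Ioc (min (p.1 : ℕ) p.2) (max (p.1 : ℕ) p.2)}

lemma card_filter_range_mem_Ioc {n a b : ℕ} (hb : b < n) :
    #{t ∈ range n | t ∈ Ioc a b} = b - a := by
  rw [filter_mem_eq_inter, inter_eq_right.2, Nat.card_Ioc]
  intro t ht
  rw [mem_range]
  exact (mem_Ioc.1 ht).2.trans_lt hb

lemma sum_card_crossingPairs {n : ℕ} (H : SimpleGraph (Fin n)) :
    ∑ t ∈ range n, (#(crossingPairs H t) : ℝ) = 2 * pathGraphWeight n H := by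
  have hpair (p : Fin n × Fin n) :
      #{t ∈ range n | t ∈ Ioc (min (p.1 : ℕ) p.2) (max (p.1 : ℕ) p.2)}
        = |((p.1 : ℕ) : ℝ) - ((p.2 : ℕ) : ℝ)| := by
    rw [card_filter_range_mem_Ioc (max_lt p.1.isLt p.2.isLt), Nat.cast_sub (min_le_max),
      Nat.cast_max, Nat.cast_min, max_sub_min_eq_abs']
  simp only [crossingPairs, card_filter, Nat.cast_sum]
  rw [sum_comm, pathGraphWeight, mul_div_cancel₀ _ two_ne_zero]
  refine sum_congr rfl fun p _ => ?_
  split_ifs with hadj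
  · simp [hadj, ← hpair]
  · simp [hadj]

lemma SimpleGraph.subset_or_compl_subset_of_reachable {V : Type*} {G : SimpleGraph V}
    {S T : Set V} (hS : ∀ a b, G.Adj a b → a ∈ S → b ∈ S)
    (hT : ∀ u ∉ T, ∀ v ∉ T, G.Reachable u v) : S ⊆ T ∨ Sᶜ ⊆ T := by
  by_contra! h
  obtain ⟨⟨u, huS, huT⟩, ⟨v, hvS, hvT⟩⟩ := And.imp Set.not_subset.1 Set.not_subset.1 h
  obtain ⟨w⟩ := hT u huT v hvT
  obtain ⟨d, -, hd₁, hd₂⟩ := w.exists_boundary_dart S huS hvS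
  exact hd₂ (hS _ _ d.adj hd₁)

lemma min_le_mul_card_crossingPairs {n : ℕ} {ν : ℝ} (hν : 0 ≤ 1 + ν)
    {H : SimpleGraph (Fin n)} (hH : IsReliableConnSpanner ν H) (t : ℕ) :
    ((min t (n - t) : ℕ) : ℝ) ≤ (1 + ν) * #(crossingPairs H t) := by
  set B := (crossingPairs H t).image Prod.fst
  obtain ⟨Bp, -, hBp, hconn⟩ := hH B
  set L : Finset (Fin n) := {i | (i : ℕ) < t}
  have hside : L ⊆ Bp ∨ Lᶜ ⊆ Bp := by
    rw [← coe_subset, ← coe_subset, coe_compl]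
    refine SimpleGraph.subset_or_compl_subset_of_reachable (G := deleteVerts H B) ?_ hconn
    intro a b hab ha
    by_contra hb
    simp only [L, coe_filter, mem_univ, true_and, Set.mem_ofPred_eq, not_lt] at ha hb
    refine hab.2.1 (mem_image.2 ⟨(a, b), ?_, rfl⟩)
    simp only [crossingPairs, mem_filter, mem_univ, true_and, mem_Ioc]
    exact ⟨hab.1, by omega⟩
  have hL : #L = min n t := Fin.card_filter_val_lt
  have hLc : #Lᶜ = n - t := by rw [card_compl, hL, Fintype.card_fin]; omega
  have hmin : min t (n - t) ≤ #Bp := by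
    rcases hside with h | h
    · have := card_le_card h; omega
    · have := card_le_card h; omega
  calc ((min t (n - t) : ℕ) : ℝ) ≤ #Bp := by exact_mod_cast hmin
    _ ≤ (1 + ν) * #B := hBp
    _ ≤ (1 + ν) * #(crossingPairs H t) := by gcongr; exact card_image_le

lemma sq_le_sixteen_mul_sum_min {n : ℕ} (hn : 2 ≤ n) :
    n ^ 2 ≤ 16 * ∑ t ∈ range n, min t (n - t) := by
  set k := n / 2
  have hhalf : ∑ t ∈ range (k + 1), t ≤ ∑ t ∈ range n, min t (n - t) := calc
    ∑ t ∈ range (k + 1), t = ∑ t ∈ range (k + 1), min t (n - t) := by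
      refine sum_congr rfl fun t ht => ?_
      rw [mem_range] at ht
      omega
    _ ≤ ∑ t ∈ range n, min t (n - t) :=
      sum_le_sum_of_subset (range_subset_range.2 (by omega))
  have hgauss := sum_range_id_mul_two (k + 1)
  have hk : 1 ≤ k := by omega
  have hnk : n ≤ 2 * k + 1 := by omega
  simp only [add_tsub_cancel_right] at hgauss
  nlinarith

/-- Every deterministic `ν`-reliable spanner (connectivity version) of the
unweighted path metric on `[n]` has total edge weight `Ω(n²)`, i.e. lightness
`Ω(n)`. -/
theorem stmt_8 (ν : ℝ) (hν : 0 < ν) :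
    ∃ c : ℝ, 0 < c ∧ ∃ N : ℕ, ∀ n, N ≤ n → ∀ H : SimpleGraph (Fin n),
      (∀ B : Finset (Fin n), ∃ Bp : Finset (Fin n), B ⊆ Bp ∧
        ((Bp.card : ℝ) ≤ (1 + ν) * (B.card : ℝ)) ∧
        ∀ u, u ∉ Bp → ∀ v, v ∉ Bp → (deleteVerts H B).Reachable u v) →
      c * (n : ℝ) ^ 2 ≤ pathGraphWeight n H := by
  have hν₁ : 0 < 1 + ν := by linarith
  refine ⟨1 / (32 * (1 + ν)), by positivity, 2, fun n hn H hH => ?_⟩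
  have key : (n : ℝ) ^ 2 ≤ 32 * (1 + ν) * pathGraphWeight n H := calc
    (n : ℝ) ^ 2 ≤ 16 * ∑ t ∈ range n, ((min t (n - t) : ℕ) : ℝ) := by
      exact_mod_cast sq_le_sixteen_mul_sum_min hn
    _ ≤ 16 * ∑ t ∈ range n, (1 + ν) * (#(crossingPairs H t) : ℝ) := by
      gcongr with t
      exact min_le_mul_card_crossingPairs hν₁.le hH t
    _ = 32 * (1 + ν) * pathGraphWeight n H := by
      rw [← mul_sum, sum_card_crossingPairs]; ring
  rw [div_mul_eq_mul_div, one_mul, div_le_iff₀ (by positivity)]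
  linarith
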